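/- If r_1 < 1 and r_{N−1} < 1 (invasion scenario B←←A, hence evolutionary scenario B⇐⇐A), then π_i < i/N for every i ∈ {1,…,N−1}, and the discrete derivative is strictly increasing: d_i < d_{i+1} for every 1 ≤ i ≤ N−1. -/

import Mathlib

/-!
Since `f_i - g_i` is affine in `i` and the denominators `g_i` are positive, `r_1 < 1` and
`r_{N-1} < 1` force `r_i < 1` for every `i`. Hence the weights `P_j = ∏_{k ≤ j} r_k⁻¹` increase
strictly. With `S_i = P_0 + ⋯ + P_{i-1}` we have `π_i = S_i / S_N`, so `d_i = P_{i-1} / S_N`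
increases strictly, and `π_i < i / N` says that the average of the first `i` weights is below
the average of all `N`.
-/

open Finset

lemma one_sub_add_mul_pos {w t : ℝ} (hw0 : 0 ≤ w) (hw1 : w ≤ 1) (ht : 0 < t) :
    0 < 1 - w + w * t := by
  rcases le_total t 1 with h | h <;> nlinarith

lemma affine_neg_of_neg_of_neg {α β x y z : ℝ} (hxy : x ≤ y) (hyz : y ≤ z)
    (hx : α + β * x < 0) (hz : α + β * z < 0) : α + β * y < 0 := by
  rcases hxy.eq_or_lt with rfl | hxy
  · exact hx
  · nlinarith [mul_nonneg (sub_nonneg.2 hyz) (neg_nonneg.2 hx.le)]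

/-- The paper's `f_i` and `g_i`, with the number `i` of `A`-players as a real variable `x`. -/
noncomputable def fitnessA (N a b w x : ℝ) : ℝ :=
  1 - w + w * (a * (x - 1) / (N - 1) + b * (N - x) / (N - 1))

noncomputable def fitnessB (N c d w x : ℝ) : ℝ :=
  1 - w + w * (c * x / (N - 1) + d * (N - x - 1) / (N - 1))

section Fitness

variable {N a b c d w : ℝ}

lemma fitnessB_pos (hc : 0 < c) (hd : 0 ≤ d) (hw0 : 0 ≤ w) (hw1 : w ≤ 1) {x : ℝ}
    (hx1 : 1 ≤ x) (hxN : x ≤ N - 1) : 0 < fitnessB N c d w x := by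
  have hN : 0 < N - 1 := by linarith
  refine one_sub_add_mul_pos hw0 hw1 (add_pos_of_pos_of_nonneg ?_ ?_)
  · exact div_pos (by positivity) hN
  · exact div_nonneg (by nlinarith) hN.le

lemma exists_fitnessA_sub_fitnessB_eq_affine (hN : N ≠ 1) :
    ∃ α β : ℝ, ∀ x, fitnessA N a b w x - fitnessB N c d w x = α + β * x := by
  have hN : N - 1 ≠ 0 := sub_ne_zero.2 hN
  refine ⟨w * (b * N - a - d * (N - 1)) / (N - 1), w * (a - b - c + d) / (N - 1), fun x => ?_⟩
  unfold fitnessA fitnessB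
  field_simp
  ring

lemma fitnessA_sub_fitnessB_neg_of_le_of_le (hN : N ≠ 1) {x y z : ℝ} (hxy : x ≤ y) (hyz : y ≤ z)
    (hx : fitnessA N a b w x - fitnessB N c d w x < 0)
    (hz : fitnessA N a b w z - fitnessB N c d w z < 0) :
    fitnessA N a b w y - fitnessB N c d w y < 0 := by
  obtain ⟨α, β, h⟩ := exists_fitnessA_sub_fitnessB_eq_affine (a := a) (b := b) (c := c) (d := d)
    (w := w) hN
  rw [h] at hx hz ⊢
  exact affine_neg_of_neg_of_neg hxy hyz hx hz

end Fitness

theorem fitness_ratio_lt_one_of_ends {N : ℕ} {a b c d w : ℝ} {r : ℕ → ℝ} (hN : 2 ≤ N)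
    (hc : 0 < c) (hd : 0 ≤ d) (hw0 : 0 ≤ w) (hw1 : w ≤ 1)
    (hr : ∀ i, 1 ≤ i → i ≤ N - 1 → r i = fitnessA N a b w i / fitnessB N c d w i)
    (hr1 : r 1 < 1) (hrN : r (N - 1) < 1) {i : ℕ} (hi1 : 1 ≤ i) (hiN : i ≤ N - 1) :
    r i < 1 := by
  have hN1 : (N : ℝ) ≠ 1 := by exact_mod_cast (by omega : N ≠ 1)
  have key : ∀ i, 1 ≤ i → i ≤ N - 1 →
      (r i < 1 ↔ fitnessA N a b w i - fitnessB N c d w i < 0) := by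
    intro i h1 h2
    have hcast : (i : ℝ) ≤ N - 1 := by
      rw [le_sub_iff_add_le]; exact_mod_cast (by omega : i + 1 ≤ N)
    rw [hr i h1 h2, div_lt_one (fitnessB_pos hc hd hw0 hw1 (by exact_mod_cast h1) hcast), sub_neg]
  rw [key i hi1 hiN]
  exact fitnessA_sub_fitnessB_neg_of_le_of_le hN1 (Nat.cast_le.2 hi1) (Nat.cast_le.2 hiN)
    (by simpa using (key 1 le_rfl (by omega)).1 hr1) ((key (N - 1) (by omega) le_rfl).1 hrN)

lemma strictMonoOn_prod_inv {r : ℕ → ℝ} {n : ℕ}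
    (hr : ∀ k, 1 ≤ k → k ≤ n → 0 < r k ∧ r k < 1) :
    StrictMonoOn (fun j => ∏ k ∈ Icc 1 j, (r k)⁻¹) (Set.Iic n) := by
  refine strictMonoOn_Iic_of_lt_succ fun m hm => ?_
  obtain ⟨hpos, hlt⟩ := hr (m + 1) (by omega) hm
  have hprod : 0 < ∏ k ∈ Icc 1 m, (r k)⁻¹ :=
    prod_pos fun k hk => inv_pos.2 (hr k (mem_Icc.1 hk).1 (by grind)).1
  simp only [Order.succ_eq_add_one, prod_Icc_succ_top (by omega : 1 ≤ m + 1)]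
  exact lt_mul_of_one_lt_right hprod ((one_lt_inv₀ hpos).2 hlt)

lemma add_sum_Icc_eq_sum_range {M : Type*} [AddCommMonoid M] (f : ℕ → M) {n : ℕ} (hn : 1 ≤ n) :
    f 0 + ∑ j ∈ Icc 1 (n - 1), f j = ∑ j ∈ range n, f j := by
  obtain ⟨n, rfl⟩ := Nat.exists_eq_add_of_le' hn
  rw [sum_range_succ', add_comm, Nat.add_sub_cancel, ← Ico_add_one_right_eq_Icc,
    sum_Ico_eq_sum_range, Nat.add_sub_cancel]
  simp only [add_comm 1]

lemma mul_sum_range_lt_of_strictMonoOn {R : Type*} [CommRing R] [LinearOrder R]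
    [IsStrictOrderedRing R] {P : ℕ → R} {i n : ℕ} (hP : StrictMonoOn P (Set.Iio n))
    (hi : 0 < i) (hin : i < n) :
    n * ∑ j ∈ range i, P j < i * ∑ j ∈ range n, P j := by
  have hstep : P (i - 1) < P i := hP (by rw [Set.mem_Iio]; omega) hin (by omega)
  have hlow : ∑ j ∈ range i, P j ≤ i * P (i - 1) := by
    simpa using sum_le_card_nsmul (range i) P (P (i - 1)) fun j hj => by
      rw [mem_range] at hj
      exact hP.monotoneOn (by rw [Set.mem_Iio]; omega) (by rw [Set.mem_Iio]; omega) (by omega)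
  have hhigh : (n - i : ℕ) * P i ≤ ∑ j ∈ Ico i n, P j := by
    simpa using card_nsmul_le_sum (Ico i n) P (P i) fun j hj => by
      rw [mem_Ico] at hj
      exact hP.monotoneOn (by rw [Set.mem_Iio]; omega) (by rw [Set.mem_Iio]; omega) hj.1
  have hsplit : ∑ j ∈ range n, P j = ∑ j ∈ range i, P j + ∑ j ∈ Ico i n, P j := by
    rw [range_eq_Ico, range_eq_Ico, sum_Ico_consecutive _ (Nat.zero_le i) hin.le]
  have hni : (0 : R) < (n - i : ℕ) := by exact_mod_cast Nat.sub_pos_of_lt hin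
  rw [Nat.cast_sub hin.le] at hhigh hni
  have hi' : (0 : R) < i := by exact_mod_cast hi
  rw [hsplit]
  nlinarith [mul_le_mul_of_nonneg_left hlow hni.le, mul_le_mul_of_nonneg_left hhigh hi'.le,
    mul_lt_mul_of_pos_left hstep (mul_pos hni hi')]

lemma fixation_eq_sum_range_div {P π : ℕ → ℝ} {N : ℕ} (hN : 1 ≤ N) (hP0 : P 0 = 1)
    (hS : ∑ j ∈ range N, P j ≠ 0) (hπ0 : π 0 = 0) (hπN : π N = 1)
    (hπ : ∀ i, 1 ≤ i → i ≤ N - 1 →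
      π i = (1 + ∑ j ∈ Icc 1 (i - 1), P j) / (1 + ∑ j ∈ Icc 1 (N - 1), P j))
    {i : ℕ} (hi : i ≤ N) : π i = (∑ j ∈ range i, P j) / ∑ j ∈ range N, P j := by
  rcases i.eq_zero_or_pos with rfl | hi0
  · simp [hπ0]
  rcases hi.eq_or_lt with rfl | hiN
  · rw [hπN, div_self hS]
  rw [hπ i hi0 (by omega), ← hP0, add_sum_Icc_eq_sum_range P hi0, add_sum_Icc_eq_sum_range P hN]

theorem moran_graph_shape_B_dominates_A_general
    (N : ℕ) (hN : 3 ≤ N) (a b c d w : ℝ)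
    (hc : 0 < c) (hd : 0 < d)
    (hw0 : 0 ≤ w) (hw1 : w ≤ 1)
    (r : ℕ → ℝ)
    (hr : ∀ i, 1 ≤ i → i ≤ N - 1 →
      r i = (1 - w + w * (a * ((i : ℝ) - 1) / ((N : ℝ) - 1) +
                b * ((N : ℝ) - (i : ℝ)) / ((N : ℝ) - 1))) /
            (1 - w + w * (c * (i : ℝ) / ((N : ℝ) - 1) +
                d * ((N : ℝ) - (i : ℝ) - 1) / ((N : ℝ) - 1))))
    (hrpos : ∀ i, 1 ≤ i → i ≤ N - 1 → 0 < r i)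
    (π : ℕ → ℝ) (hπ0 : π 0 = 0) (hπN : π N = 1)
    (hπ : ∀ i, 1 ≤ i → i ≤ N - 1 →
      π i = (1 + ∑ j ∈ Finset.Icc 1 (i - 1), ∏ k ∈ Finset.Icc 1 j, (r k)⁻¹) /
            (1 + ∑ j ∈ Finset.Icc 1 (N - 1), ∏ k ∈ Finset.Icc 1 j, (r k)⁻¹))
    (dd : ℕ → ℝ) (hdd : ∀ i, 1 ≤ i → i ≤ N → dd i = π i - π (i - 1))
    (hr1 : r 1 < 1) (hrN1 : r (N - 1) < 1) :
    (∀ i, 1 ≤ i → i ≤ N - 1 → π i < (i : ℝ) / N) ∧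
    (∀ i, 1 ≤ i → i ≤ N - 1 → dd i < dd (i + 1)) := by
  set P : ℕ → ℝ := fun j => ∏ k ∈ Icc 1 j, (r k)⁻¹
  have hmono : StrictMonoOn P (Set.Iio N) :=
    (strictMonoOn_prod_inv (n := N - 1) fun k hk1 hkN => ⟨hrpos k hk1 hkN,
      fitness_ratio_lt_one_of_ends (by omega) hc hd.le hw0 hw1 hr hr1 hrN1 hk1 hkN⟩).mono
      fun j hj => by simp only [Set.mem_Iio, Set.mem_Iic] at hj ⊢; omega
  have hS : 0 < ∑ j ∈ range N, P j :=
    sum_pos (fun j hj => prod_pos fun k hk => inv_pos.2 (hrpos k (mem_Icc.1 hk).1 (by grind)))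
      ⟨0, mem_range.2 (by omega)⟩
  have hπS (i : ℕ) (hi : i ≤ N) : π i = (∑ j ∈ range i, P j) / ∑ j ∈ range N, P j :=
    fixation_eq_sum_range_div (by omega) (by simp [P]) hS.ne' hπ0 hπN hπ hi
  have hdP (i : ℕ) (hi1 : 1 ≤ i) (hiN : i ≤ N) : dd i = P (i - 1) / ∑ j ∈ range N, P j := by
    obtain ⟨i, rfl⟩ := Nat.exists_eq_add_of_le' hi1
    rw [hdd _ hi1 hiN, hπS _ hiN, hπS _ (by omega), Nat.add_sub_cancel, sum_range_succ]
    ring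
  refine ⟨fun i hi1 hiN => ?_, fun i hi1 hiN => ?_⟩
  · rw [hπS i (by omega), div_lt_div_iff₀ hS (by positivity)]
    exact mul_comm (N : ℝ) _ ▸ mul_sum_range_lt_of_strictMonoOn hmono hi1 (by omega)
  · rw [hdP i hi1 (by omega), hdP (i + 1) (by omega) (by omega), Nat.add_sub_cancel]
    exact div_lt_div_of_pos_right
      (hmono (Set.mem_Iio.2 (by omega)) (Set.mem_Iio.2 (by omega)) (by omega)) hS

/-- in scenario B←←A (r_1 < 1 and r_{N-1} < 1), π_i < i/N for all
1 ≤ i ≤ N−1, and the discrete derivative is strictly increasing. -/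
theorem moran_graph_shape_B_dominates_A
    (N : ℕ) (hN : 3 ≤ N) (a b c d w : ℝ)
    (ha : 0 < a) (hb : 0 < b) (hc : 0 < c) (hd : 0 < d)
    (hw0 : 0 ≤ w) (hw1 : w ≤ 1)
    (r : ℕ → ℝ)
    (hr : ∀ i, 1 ≤ i → i ≤ N - 1 →
      r i = (1 - w + w * (a * ((i : ℝ) - 1) / ((N : ℝ) - 1) +
                b * ((N : ℝ) - (i : ℝ)) / ((N : ℝ) - 1))) /
            (1 - w + w * (c * (i : ℝ) / ((N : ℝ) - 1) +
                d * ((N : ℝ) - (i : ℝ) - 1) / ((N : ℝ) - 1))))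
    (hrpos : ∀ i, 1 ≤ i → i ≤ N - 1 → 0 < r i)
    (π : ℕ → ℝ) (hπ0 : π 0 = 0) (hπN : π N = 1)
    (hπ : ∀ i, 1 ≤ i → i ≤ N - 1 →
      π i = (1 + ∑ j ∈ Finset.Icc 1 (i - 1), ∏ k ∈ Finset.Icc 1 j, (r k)⁻¹) /
            (1 + ∑ j ∈ Finset.Icc 1 (N - 1), ∏ k ∈ Finset.Icc 1 j, (r k)⁻¹))
    (dd : ℕ → ℝ) (hdd : ∀ i, 1 ≤ i → i ≤ N → dd i = π i - π (i - 1))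
    (hr1 : r 1 < 1) (hrN1 : r (N - 1) < 1) :
    (∀ i, 1 ≤ i → i ≤ N - 1 → π i < (i : ℝ) / N) ∧
    (∀ i, 1 ≤ i → i ≤ N - 1 → dd i < dd (i + 1)) :=
  moran_graph_shape_B_dominates_A_general N hN a b c d w hc hd hw0 hw1 r hr hrpos π hπ0 hπN hπ dd
    hdd hr1 hrN1
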